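/- arXiv:1306.0019 — 2 statements merged into one kernel-verified Lean document; each statement's English description precedes it below -/
import Mathlib

section
/- Let X be a distributive lattice with a least element ⊥ and a greatest element ⊤, let n ≥ 1, and let x = (x_1, …, x_n) be a sequence in X. Then for every k with 1 ≤ k ≤ n, the identity P(x,n,k) = P(x,n−1,k) ∧ (P(x,n−1,k−1) ∨ x_n) holds. -/
/-- The `k`-th element (for `1 ≤ k ≤ m`) of the sequence `x_1, …, x_m` sorted with
respect to the lattice: the meet, over all `k`-element subsets `I` of `{1, …, m}`,
of the joins `⋁_{i ∈ I} x i`. -/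
noncomputable def latticeSortElem {X : Type*} [Lattice X] (x : ℕ → X) (m k : ℕ)
    (hk : 1 ≤ k) (hkm : k ≤ m) : X :=
  ((Finset.Icc 1 m).powersetCard k).attach.inf'
    (Finset.attach_nonempty_iff.mpr
      (Finset.powersetCard_nonempty.mpr (by rw [Nat.card_Icc]; omega)))
    (fun I => I.1.sup'
      (Finset.card_pos.mp (by rw [(Finset.mem_powersetCard.mp I.2).2]; omega)) x)

/-- `x` sorted with respect to the lattice, as a total function; the value is the
`k`-th sorted element when `1 ≤ k ≤ m` (and an irrelevant junk value otherwise). -/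
noncomputable def latticeSort {X : Type*} [Lattice X] (x : ℕ → X) (m k : ℕ) : X :=
  if h : 1 ≤ k ∧ k ≤ m then latticeSortElem x m k h.1 h.2 else x k

/-- `P x m k` from the paper: `⊥` for `k = 0`, the `k`-th element of
`(x_1, …, x_m)` sorted with respect to the lattice for `1 ≤ k ≤ m`,
and `⊤` for `k = m + 1`. -/
noncomputable def pascalSort {X : Type*} [Lattice X] [BoundedOrder X]
    (x : ℕ → X) (m k : ℕ) : X :=
  if h0 : k = 0 then ⊥
  else if h : k ≤ m then latticeSortElem x m k (Nat.pos_of_ne_zero h0) h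
  else ⊤


theorem pascalSort_eq_inf {X : Type*} [Lattice X] [BoundedOrder X]
    (x : ℕ → X) (m k : ℕ) :
    pascalSort x m k = ((Finset.Icc 1 m).powersetCard k).inf (fun I => I.sup x) := by
  unfold pascalSort
  split_ifs with h0 h
  · subst h0
    simp [Finset.powersetCard_zero]
  · unfold latticeSortElem
    rw [Finset.inf'_eq_inf]
    trans (((Finset.Icc 1 m).powersetCard k).attach.inf fun I => (↑I : Finset ℕ).sup x)
    · exact Finset.inf_congr rfl fun I _ => Finset.sup'_eq_sup _ _
    · exact Finset.inf_attach _ _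
  · rw [Finset.powersetCard_eq_empty.mpr (by rw [Nat.card_Icc]; omega)]
    simp

/-- In a bounded distributive lattice, the Pascal-type recursion
`P(x,n,k) = P(x,n−1,k) ⊓ (P(x,n−1,k−1) ⊔ x n)` holds for `1 ≤ k ≤ n`. -/
theorem pascalSort_recursion {X : Type*} [DistribLattice X] [BoundedOrder X]
    (n : ℕ) (hn : 1 ≤ n) (x : ℕ → X) (k : ℕ) (hk1 : 1 ≤ k) (hkn : k ≤ n) :
    pascalSort x n k = pascalSort x (n - 1) k ⊓ (pascalSort x (n - 1) (k - 1) ⊔ x n) := by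
  
  obtain ⟨m, rfl⟩ : ∃ m, n = m + 1 := ⟨n - 1, by omega⟩
  obtain ⟨j, rfl⟩ : ∃ j, k = j + 1 := ⟨k - 1, by omega⟩
  simp only [Nat.add_sub_cancel]
  rw [pascalSort_eq_inf, pascalSort_eq_inf, pascalSort_eq_inf]
  have hins : Finset.Icc 1 (m + 1) = insert (m + 1) (Finset.Icc 1 m) := by
    ext a; simp only [Finset.mem_Icc, Finset.mem_insert]; omega
  have hnotmem : (m + 1) ∉ Finset.Icc 1 m := by simp
  rw [hins, Finset.powersetCard_succ_insert hnotmem, Finset.inf_union, Finset.inf_image]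
  congr 1
  rw [Finset.inf_sup_distrib_right]
  apply Finset.inf_congr rfl
  intro I hI
  simp [Function.comp, Finset.sup_insert, sup_comm]
end

section
/- Let X be a lattice, let n ≥ 1, and let x = (x_1, …, x_n) be a sequence in X. Then the operation of sorting with respect to the lattice is idempotent: letting y = x↑~ be x sorted with respect to the lattice, one has y↑~ = y, i.e., sorting the sorted sequence again yields the same sequence. -/
lemma latticeSortElem_le_sup {X : Type*} [Lattice X] (x : ℕ → X) (m k : ℕ)
    (hk : 1 ≤ k) (hkm : k ≤ m) (I : Finset ℕ)
    (hI : I ∈ (Finset.Icc 1 m).powersetCard k) (hne : I.Nonempty) :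
    latticeSortElem x m k hk hkm ≤ I.sup' hne x := by
  have := Finset.inf'_le (s := ((Finset.Icc 1 m).powersetCard k).attach)
    (f := fun J => J.1.sup'
      (Finset.card_pos.mp (by rw [(Finset.mem_powersetCard.mp J.2).2]; omega)) x)
    (b := ⟨I, hI⟩) (Finset.mem_attach _ _)
  exact this

lemma latticeSortElem_mono {X : Type*} [Lattice X] (x : ℕ → X) (m a b : ℕ)
    (ha : 1 ≤ a) (hab : a ≤ b) (hb : b ≤ m) :
    latticeSortElem x m a ha (hab.trans hb) ≤ latticeSortElem x m b (ha.trans hab) hb := by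
  apply Finset.le_inf'
  rintro ⟨J, hJ⟩ -
  obtain ⟨hJsub, hJcard⟩ := Finset.mem_powersetCard.mp hJ
  obtain ⟨I, hIJ, hIcard⟩ := Finset.exists_subset_card_eq (hJcard ▸ hab)
  have hne : I.Nonempty := Finset.card_pos.mp (by omega)
  have hImem : I ∈ (Finset.Icc 1 m).powersetCard a :=
    Finset.mem_powersetCard.mpr ⟨hIJ.trans hJsub, hIcard⟩
  refine (latticeSortElem_le_sup x m a ha (hab.trans hb) I hImem hne).trans ?_
  exact Finset.sup'_le _ _ fun i hi => Finset.le_sup' x (hIJ hi)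

/-- Sorting with respect to the lattice is idempotent: sorting the sorted
sequence again yields the same sequence. -/
theorem latticeSort_idempotent {X : Type*} [Lattice X] (n : ℕ) (hn : 1 ≤ n) (x : ℕ → X) :
    ∀ k, 1 ≤ k → k ≤ n →
      latticeSort (fun j => latticeSort x n j) n k = latticeSort x n k := by
  intro k hk hkn
  set y : ℕ → X := fun j => latticeSort x n j with hy
  have hyval : ∀ j (h1 : 1 ≤ j) (h2 : j ≤ n), y j = latticeSortElem x n j h1 h2 := by
    intro j h1 h2
    simp only [hy, latticeSort, dif_pos (And.intro h1 h2)]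
  have hymono : ∀ a b, 1 ≤ a → a ≤ b → b ≤ n → y a ≤ y b := by
    intro a b h1 h2 h3
    rw [hyval a h1 (h2.trans h3), hyval b (h1.trans h2) h3]
    exact latticeSortElem_mono x n a b h1 h2 h3
  rw [show latticeSort y n k = latticeSortElem y n k hk hkn from
    dif_pos (And.intro hk hkn)]
  rw [show latticeSort x n k = y k from rfl]
  apply le_antisymm
  · -- use I = Icc 1 k
    have hIk : Finset.Icc 1 k ∈ (Finset.Icc 1 n).powersetCard k :=
      Finset.mem_powersetCard.mpr
        ⟨Finset.Icc_subset_Icc le_rfl hkn, by rw [Nat.card_Icc]; omega⟩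
    have hne : (Finset.Icc 1 k).Nonempty := by
      rw [Finset.nonempty_Icc]; omega
    refine (latticeSortElem_le_sup y n k hk hkn _ hIk hne).trans ?_
    apply Finset.sup'_le
    intro i hi
    rw [Finset.mem_Icc] at hi
    exact hymono i k hi.1 hi.2 hkn
  · apply Finset.le_inf'
    rintro ⟨I, hI⟩ -
    obtain ⟨hIsub, hIcard⟩ := Finset.mem_powersetCard.mp hI
    have hne : I.Nonempty := Finset.card_pos.mp (by omega)
    have hmax := I.max'_mem hne
    have hmaxIcc := hIsub hmax
    rw [Finset.mem_Icc] at hmaxIcc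
    have hksub : I ⊆ Finset.Icc 1 (I.max' hne) := by
      intro i hi
      have := hIsub hi
      rw [Finset.mem_Icc] at this ⊢
      exact ⟨this.1, Finset.le_max' I i hi⟩
    have hkle : k ≤ I.max' hne := by
      have := Finset.card_le_card hksub
      rw [Nat.card_Icc] at this
      omega
    exact (hymono k (I.max' hne) hk hkle hmaxIcc.2).trans
      (Finset.le_sup' y hmax)
end
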